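/- arXiv:2506.13025 — 2 statements merged into one kernel-verified Lean document; each statement's English description precedes it below -/
import Mathlib

section
/- Under the permutation missingness model, E(Y¹ | R₁=0) = Σ_{x∈𝒳} P(X¹=x | R₁=0, R₂=1) · [ Σ_{y∈𝒴} y · P(Y¹=y | R₁=1) · P(X¹=x | R₁=1, Y¹=y, R₂=1) ] / [ Σ_{y∈𝒴} P(Y¹=y | R₁=1) · P(X¹=x | R₁=1, Y¹=y, R₂=1) ]. -/
open MeasureTheory

/-!
Bayes' rule turns the bracketed ratio into `E(Y¹ | R₁ = 1, X¹ = x)`, once `R₂ = 1` is dropped from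
the conditioning event `{R₁ = 1, Y¹ = y, R₂ = 1}` by (ii). By (i), `E(Y¹ | R₁ = r, X¹ = x)` equals
`E(Y¹ | X¹ = x)` for both values of `r`, and by (ii) again `P(X¹ = x | R₁ = 0, R₂ = 1)` equals
`P(X¹ = x | R₁ = 0)`. The right-hand side is therefore
`∑ₓ P(X¹ = x | R₁ = 0) E(Y¹ | R₁ = 0, X¹ = x)`, which is `E(Y¹ | R₁ = 0)` by the tower property.
-/

noncomputable def pr {Ω : Type*} [MeasurableSpace Ω] (μ : Measure Ω) (s : Set Ω) : ℝ :=
  (μ s).toReal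

noncomputable def cpr {Ω : Type*} [MeasurableSpace Ω] (μ : Measure Ω) (s t : Set Ω) : ℝ :=
  pr μ (s ∩ t) / pr μ t

section

variable {Ω : Type*} [MeasurableSpace Ω] (μ : Measure Ω)

noncomputable def condMean (Y : Ω → ℝ) (𝒴 : Finset ℝ) (c : Set Ω) : ℝ :=
  ∑ y ∈ 𝒴, y * cpr μ {ω | Y ω = y} c

lemma pr_nonneg (s : Set Ω) : 0 ≤ pr μ s := ENNReal.toReal_nonneg

variable [IsFiniteMeasure μ]

lemma pr_mono {s t : Set Ω} (h : s ⊆ t) : pr μ s ≤ pr μ t := measureReal_mono h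

lemma cpr_pos {s c : Set Ω} (h : 0 < pr μ (s ∩ c)) : 0 < cpr μ s c :=
  div_pos h (h.trans_le (pr_mono μ Set.inter_subset_right))

lemma pr_eq_sum_pr_inter_fiber {α : Type*} {f : Ω → α}
    (hf : ∀ a, MeasurableSet {ω | f ω = a}) {s : Set Ω} (hs : MeasurableSet s)
    (t : Finset α) (ht : ∀ ω ∈ s, f ω ∈ t) :
    pr μ s = ∑ a ∈ t, pr μ ({ω | f ω = a} ∩ s) := by
  have hcover : s = ⋃ a ∈ t, {ω | f ω = a} ∩ s := by
    ext ω
    simpa using fun hω => ht ω hω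
  have hdisj : (t : Set α).PairwiseDisjoint fun a => {ω | f ω = a} ∩ s :=
    fun a _ b _ hab => Set.disjoint_left.2 fun ω ha hb => hab (ha.1.symm.trans hb.1)
  conv_lhs => rw [hcover]
  exact measureReal_biUnion_finset hdisj fun a _ => (hf a).inter hs

lemma cpr_eq_sum_cpr_inter_fiber {α : Type*} {f : Ω → α}
    (hf : ∀ a, MeasurableSet {ω | f ω = a}) {s c : Set Ω} (hs : MeasurableSet s)
    (hc : MeasurableSet c) (t : Finset α) (ht : ∀ ω ∈ s, f ω ∈ t) :
    cpr μ s c = ∑ a ∈ t, cpr μ ({ω | f ω = a} ∩ s) c := by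
  simp only [cpr, ← Finset.sum_div, Set.inter_assoc]
  rw [pr_eq_sum_pr_inter_fiber μ hf (hs.inter hc) t fun ω hω => ht ω hω.1]

/-- The chain rule `P(s ∩ t | c) = P(t | c) P(s | c ∩ t)`; it needs no positivity, since both
sides vanish when `P(c ∩ t) = 0`. -/
lemma cpr_mul_cpr_inter (s t c : Set Ω) : cpr μ t c * cpr μ s (c ∩ t) = cpr μ (s ∩ t) c := by
  have hct : t ∩ c = c ∩ t := Set.inter_comm t c
  have hstc : s ∩ t ∩ c = s ∩ (c ∩ t) := by rw [Set.inter_assoc, hct]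
  simp only [cpr, hct, hstc]
  rcases (pr_nonneg μ (c ∩ t)).eq_or_lt with h | h
  · have hs : pr μ (s ∩ (c ∩ t)) = 0 :=
      le_antisymm (h ▸ pr_mono μ Set.inter_subset_right) (pr_nonneg μ _)
    simp [← h, hs]
  · field_simp

lemma cpr_inter_eq_of_indep {s b c : Set Ω} (hcb : 0 < pr μ (c ∩ b))
    (hindep : cpr μ (b ∩ s) c = cpr μ b c * cpr μ s c) : cpr μ s (c ∩ b) = cpr μ s c := by
  apply mul_left_cancel₀ (cpr_pos μ (Set.inter_comm c b ▸ hcb)).ne'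
  rw [cpr_mul_cpr_inter, Set.inter_comm, hindep]

lemma cpr_inter_eq_mul_of_indep_fiber {α : Type*} {f : Ω → α}
    (hf : ∀ a, MeasurableSet {ω | f ω = a}) {b s c : Set Ω} (hb : MeasurableSet b)
    (hs : MeasurableSet s) (hc : MeasurableSet c) (t : Finset α) (ht : ∀ ω ∈ s, f ω ∈ t)
    (hindep : ∀ a, cpr μ (b ∩ ({ω | f ω = a} ∩ s)) c =
      cpr μ b c * cpr μ ({ω | f ω = a} ∩ s) c) :
    cpr μ (b ∩ s) c = cpr μ b c * cpr μ s c := by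
  rw [cpr_eq_sum_cpr_inter_fiber μ hf (hb.inter hs) hc t fun ω hω => ht ω hω.2,
    cpr_eq_sum_cpr_inter_fiber μ hf hs hc t ht, Finset.mul_sum]
  refine Finset.sum_congr rfl fun a _ => ?_
  rw [Set.inter_left_comm, hindep]

lemma condMean_eq_sum_cpr_mul_condMean {𝒳 : Type*} [Fintype 𝒳] {X : Ω → 𝒳} {Y : Ω → ℝ}
    (hX : ∀ x, MeasurableSet {ω | X ω = x}) (hY : ∀ y, MeasurableSet {ω | Y ω = y})
    (𝒴 : Finset ℝ) {c : Set Ω} (hc : MeasurableSet c) :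
    condMean μ Y 𝒴 c = ∑ x, cpr μ {ω | X ω = x} c * condMean μ Y 𝒴 (c ∩ {ω | X ω = x}) := by
  simp only [condMean, Finset.mul_sum]
  rw [Finset.sum_comm]
  refine Finset.sum_congr rfl fun y _ => ?_
  rw [cpr_eq_sum_cpr_inter_fiber μ hX (hY y) hc Finset.univ fun ω _ => Finset.mem_univ _,
    Finset.mul_sum]
  refine Finset.sum_congr rfl fun x _ => ?_
  rw [Set.inter_comm, ← cpr_mul_cpr_inter]
  ring

lemma condMean_inter_eq_of_indep {Y : Ω → ℝ} {𝒴 : Finset ℝ} {b c : Set Ω}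
    (hcb : 0 < pr μ (c ∩ b))
    (hindep : ∀ y ∈ 𝒴, cpr μ (b ∩ {ω | Y ω = y}) c = cpr μ b c * cpr μ {ω | Y ω = y} c) :
    condMean μ Y 𝒴 (c ∩ b) = condMean μ Y 𝒴 c :=
  Finset.sum_congr rfl fun y hy => by rw [cpr_inter_eq_of_indep μ hcb (hindep y hy)]

lemma condMean_inter_eq_bayes {Y : Ω → ℝ} {𝒴 : Finset ℝ}
    (hY : ∀ y, MeasurableSet {ω | Y ω = y}) (hrange : ∀ ω, Y ω ∈ 𝒴) {s c : Set Ω}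
    (hs : MeasurableSet s) (hc : MeasurableSet c) (hsc : 0 < pr μ (s ∩ c)) :
    condMean μ Y 𝒴 (c ∩ s) =
      (∑ y ∈ 𝒴, y * cpr μ {ω | Y ω = y} c * cpr μ s (c ∩ {ω | Y ω = y})) /
        ∑ y ∈ 𝒴, cpr μ {ω | Y ω = y} c * cpr μ s (c ∩ {ω | Y ω = y}) := by
  have hterm : ∀ y, cpr μ {ω | Y ω = y} c * cpr μ s (c ∩ {ω | Y ω = y}) =
      cpr μ s c * cpr μ {ω | Y ω = y} (c ∩ s) := fun y => by
    rw [cpr_mul_cpr_inter, Set.inter_comm, ← cpr_mul_cpr_inter]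
  have htotal : ∑ y ∈ 𝒴, cpr μ {ω | Y ω = y} c * cpr μ s (c ∩ {ω | Y ω = y}) = cpr μ s c := by
    rw [cpr_eq_sum_cpr_inter_fiber μ hY hs hc 𝒴 fun ω _ => hrange ω]
    refine Finset.sum_congr rfl fun y _ => ?_
    rw [cpr_mul_cpr_inter, Set.inter_comm]
  rw [htotal, eq_div_iff (cpr_pos μ hsc).ne', condMean, Finset.sum_mul]
  refine Finset.sum_congr rfl fun y _ => ?_
  rw [mul_assoc _ (cpr μ _ c), hterm]
  ring

end

/-- **Identification of `E(Y¹ | R₁ = 0)` in the permutation missingness model.**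
`Y¹` is real-valued with finite range `⊆ 𝒴`, `X¹` has values in a finite set `𝒳`, and
`R₁, R₂` are `Bool`-valued (`true = 1`) missingness indicators satisfying
(i) `R₁ ⫫ Y¹ | X¹`; (ii) given `R₁ = 1, Y¹ = y`, `R₂ ⫫ X¹`, and given `R₁ = 0`,
`R₂ ⫫ (Y¹, X¹)`; (iii) positivity.  Then
`E(Y¹ | R₁=0) = ∑_x P(X¹=x | R₁=0, R₂=1) ⬝
  [∑_y y P(Y¹=y | R₁=1) P(X¹=x | R₁=1, Y¹=y, R₂=1)] /
  [∑_y P(Y¹=y | R₁=1) P(X¹=x | R₁=1, Y¹=y, R₂=1)]`,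
conditional expectations being finite sums over `𝒴`. -/
theorem stmt5
    {Ω : Type*} [MeasurableSpace Ω] (μ : Measure Ω) [IsProbabilityMeasure μ]
    {𝒳 : Type*} [Fintype 𝒳] [MeasurableSpace 𝒳] [MeasurableSingletonClass 𝒳]
    (Y1 : Ω → ℝ) (X1 : Ω → 𝒳) (R1 R2 : Ω → Bool)
    (hY1m : Measurable Y1) (hX1m : Measurable X1) (hR1m : Measurable R1)
    (hR2m : Measurable R2)
    (𝒴 : Finset ℝ) (hrange : ∀ ω, Y1 ω ∈ 𝒴)
    (hCI1 : ∀ x : 𝒳, 0 < pr μ {ω | X1 ω = x} → ∀ (r : Bool) (y : ℝ),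
      cpr μ {ω | R1 ω = r ∧ Y1 ω = y} {ω | X1 ω = x} =
        cpr μ {ω | R1 ω = r} {ω | X1 ω = x} * cpr μ {ω | Y1 ω = y} {ω | X1 ω = x})
    (hCI2a : ∀ y : ℝ, 0 < pr μ {ω | R1 ω = true ∧ Y1 ω = y} → ∀ (r : Bool) (x : 𝒳),
      cpr μ {ω | R2 ω = r ∧ X1 ω = x} {ω | R1 ω = true ∧ Y1 ω = y} =
        cpr μ {ω | R2 ω = r} {ω | R1 ω = true ∧ Y1 ω = y} *
          cpr μ {ω | X1 ω = x} {ω | R1 ω = true ∧ Y1 ω = y})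
    (hCI2b : ∀ (r : Bool) (y : ℝ) (x : 𝒳),
      cpr μ {ω | R2 ω = r ∧ Y1 ω = y ∧ X1 ω = x} {ω | R1 ω = false} =
        cpr μ {ω | R2 ω = r} {ω | R1 ω = false} *
          cpr μ {ω | Y1 ω = y ∧ X1 ω = x} {ω | R1 ω = false})
    (hpos1 : ∀ x : 𝒳, ∀ y ∈ 𝒴,
      0 < pr μ {ω | R1 ω = true ∧ R2 ω = true ∧ Y1 ω = y ∧ X1 ω = x})
    (hpos2 : 0 < pr μ {ω | R1 ω = false ∧ R2 ω = true}) :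
    (∑ y ∈ 𝒴, y * cpr μ {ω | Y1 ω = y} {ω | R1 ω = false}) =
      ∑ x : 𝒳, cpr μ {ω | X1 ω = x} {ω | R1 ω = false ∧ R2 ω = true} *
        ((∑ y ∈ 𝒴, y * cpr μ {ω | Y1 ω = y} {ω | R1 ω = true} *
            cpr μ {ω | X1 ω = x} {ω | R1 ω = true ∧ Y1 ω = y ∧ R2 ω = true}) /
          (∑ y ∈ 𝒴, cpr μ {ω | Y1 ω = y} {ω | R1 ω = true} *
            cpr μ {ω | X1 ω = x} {ω | R1 ω = true ∧ Y1 ω = y ∧ R2 ω = true})) := by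
  simp only [Set.ofPred_and] at hCI1 hCI2a hCI2b hpos1 hpos2 ⊢
  have hY : ∀ y, MeasurableSet {ω | Y1 ω = y} := fun y => hY1m (measurableSet_singleton y)
  have hX : ∀ x, MeasurableSet {ω | X1 ω = x} := fun x => hX1m (measurableSet_singleton x)
  have hR1 : ∀ r, MeasurableSet {ω | R1 ω = r} := fun r => hR1m (measurableSet_singleton r)
  have hR2 : ∀ r, MeasurableSet {ω | R2 ω = r} := fun r => hR2m (measurableSet_singleton r)
  obtain ⟨ω₀⟩ := nonempty_of_isProbabilityMeasure μ
  have hR2_ignorable₀ : ∀ x, cpr μ {ω | X1 ω = x} ({ω | R1 ω = false} ∩ {ω | R2 ω = true}) =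
      cpr μ {ω | X1 ω = x} {ω | R1 ω = false} := fun x =>
    cpr_inter_eq_of_indep μ hpos2 (cpr_inter_eq_mul_of_indep_fiber μ hY (hR2 true) (hX x)
      (hR1 false) 𝒴 (fun ω _ => hrange ω) fun y => hCI2b true y x)
  have hR2_ignorable₁ : ∀ x y,
      cpr μ {ω | X1 ω = x} ({ω | R1 ω = true} ∩ ({ω | Y1 ω = y} ∩ {ω | R2 ω = true})) =
        cpr μ {ω | X1 ω = x} ({ω | R1 ω = true} ∩ {ω | Y1 ω = y}) := by
    intro x y
    by_cases hy : y ∈ 𝒴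
    · have hpos : 0 < pr μ ({ω | R1 ω = true} ∩ {ω | Y1 ω = y} ∩ {ω | R2 ω = true}) :=
        (hpos1 x y hy).trans_le (pr_mono μ fun ω h => ⟨⟨h.1, h.2.2.1⟩, h.2.1⟩)
      rw [← Set.inter_assoc, cpr_inter_eq_of_indep μ hpos
        (hCI2a y (hpos.trans_le (pr_mono μ Set.inter_subset_left)) true x)]
    · have hempty : {ω | Y1 ω = y} = ∅ :=
        Set.eq_empty_of_forall_notMem fun ω hω => hy (hω ▸ hrange ω)
      simp [hempty]
  have hR1_ignorable : ∀ x r, 0 < pr μ ({ω | X1 ω = x} ∩ {ω | R1 ω = r}) →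
      condMean μ Y1 𝒴 ({ω | R1 ω = r} ∩ {ω | X1 ω = x}) = condMean μ Y1 𝒴 {ω | X1 ω = x} := by
    intro x r hxr
    rw [Set.inter_comm]
    exact condMean_inter_eq_of_indep μ hxr
      fun y _ => hCI1 x (hxr.trans_le (pr_mono μ Set.inter_subset_left)) r y
  change condMean μ Y1 𝒴 _ = _
  rw [condMean_eq_sum_cpr_mul_condMean μ hX hY 𝒴 (hR1 false)]
  refine Finset.sum_congr rfl fun x _ => ?_
  have hxA1 : 0 < pr μ ({ω | X1 ω = x} ∩ {ω | R1 ω = true}) :=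
    (hpos1 x _ (hrange ω₀)).trans_le (pr_mono μ fun ω h => ⟨h.2.2.2, h.1⟩)
  simp only [hR2_ignorable₀, hR2_ignorable₁]
  rw [← condMean_inter_eq_bayes μ hY hrange (hX x) (hR1 true) hxA1, hR1_ignorable x true hxA1]
  rcases (pr_nonneg μ ({ω | X1 ω = x} ∩ {ω | R1 ω = false})).eq_or_lt with h | h
  · simp [cpr, ← h]
  · rw [hR1_ignorable x false h]
end

section
/- Fix ρ > 0 and let P and P̄ be two regular binary-outcome observed-data distributions, with nuisances μ, ξ, ϖ, θ under P and μ̄, ξ̄, ϖ̄, θ̄ under P̄, and influence function φ_ρ(o; P̄) = ρ ((1+ξ̄(x))/(ρ+ξ̄(x)))² (r₁ r₂ ϖ̄(x)/P̄(R₁=1, R₂=1)) (y − μ̄(x)) + ((1−r₁) r₂ / P̄(R₁=0, R₂=1)) ( ξ̄(x)/(ρ + ξ̄(x)) − θ̄ ). Then θ̄ − θ − Σ_o φ_ρ(o; P̄)(P̄(o) − P(o)) = (P(R₁=1,R₂=1)/P̄(R₁=1,R₂=1)) Σ_x (ρ/(ρ+ξ̄(x))²) (1+ξ̄(x))² (μ(x)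 − μ̄(x)) ϖ̄(x) P(X=x | R₁=1, R₂=1) + (P(R₁=0,R₂=1)/P̄(R₁=0,R₂=1)) Σ_x ( ξ̄(x)/(ρ+ξ̄(x)) − θ ) P(X=x | R₁=0, R₂=1) + ( 1 − P(R₁=0,R₂=1)/P̄(R₁=0,R₂=1) ) (θ̄ − θ). -/
open Finset

/-- The real value (`0` or `1`) of a bit. -/
noncomputable def bR (r : Bool) : ℝ := if r then 1 else 0

/-- A regular binary-outcome observed-data distribution of `O = (X, Y, R₁, R₂)` on
`𝒳 × {0,1} × {0,1} × {0,1}` (`Bool`-valued, `true = 1`): a probability mass function with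
every point of positive probability. -/
def RegularB {𝒳 : Type*} [Fintype 𝒳] (p : 𝒳 → Bool → Bool → Bool → ℝ) : Prop :=
  (∑ x : 𝒳, ∑ y : Bool, ∑ r₁ : Bool, ∑ r₂ : Bool, p x y r₁ r₂) = 1 ∧
    ∀ (x : 𝒳) (y r₁ r₂ : Bool), 0 < p x y r₁ r₂

/-- `P(R₁ = r₁, R₂ = r₂)`. -/
noncomputable def pRB {𝒳 : Type*} [Fintype 𝒳] (p : 𝒳 → Bool → Bool → Bool → ℝ)
    (r₁ r₂ : Bool) : ℝ :=
  ∑ x : 𝒳, ∑ y : Bool, p x y r₁ r₂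

/-- `P(X = x | R₁ = r₁, R₂ = r₂)`. -/
noncomputable def pXB {𝒳 : Type*} [Fintype 𝒳] (p : 𝒳 → Bool → Bool → Bool → ℝ)
    (r₁ r₂ : Bool) (x : 𝒳) : ℝ :=
  (∑ y : Bool, p x y r₁ r₂) / pRB p r₁ r₂

/-- `μ(x) = P(Y = 1 | X = x, R₁ = 1, R₂ = 1)`. -/
noncomputable def muB {𝒳 : Type*} [Fintype 𝒳] (p : 𝒳 → Bool → Bool → Bool → ℝ) (x : 𝒳) : ℝ :=
  p x true true true / (∑ y : Bool, p x y true true)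

/-- `ξ(x) = μ(x)/(1 − μ(x))`, the conditional odds `odds(Y = 1 | X = x, R₁ = 1, R₂ = 1)`. -/
noncomputable def xiB {𝒳 : Type*} [Fintype 𝒳] (p : 𝒳 → Bool → Bool → Bool → ℝ) (x : 𝒳) : ℝ :=
  muB p x / (1 - muB p x)

/-- The density ratio `ϖ(x) = P(X = x | R₁ = 0, R₂ = 1) / P(X = x | R₁ = 1, R₂ = 1)`. -/
noncomputable def varpiB {𝒳 : Type*} [Fintype 𝒳] (p : 𝒳 → Bool → Bool → Bool → ℝ) (x : 𝒳) : ℝ :=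
  pXB p false true x / pXB p true true x

/-- `θ_ρ(Q) = E_Q(ξ(X)/(ρ + ξ(X)) | R₁ = 0, R₂ = 1)`. -/
noncomputable def thetaB {𝒳 : Type*} [Fintype 𝒳] (ρ : ℝ)
    (p : 𝒳 → Bool → Bool → Bool → ℝ) : ℝ :=
  ∑ x : 𝒳, (xiB p x / (ρ + xiB p x)) * pXB p false true x

/-- The influence function `φ_ρ(o; Q)` at the observation `o = (x, y, r₁, r₂)`. -/
noncomputable def phiB {𝒳 : Type*} [Fintype 𝒳] (ρ : ℝ)
    (p : 𝒳 → Bool → Bool → Bool → ℝ) (x : 𝒳) (y r₁ r₂ : Bool) : ℝ :=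
  ρ * ((1 + xiB p x) / (ρ + xiB p x)) ^ 2 *
      (bR r₁ * bR r₂ * varpiB p x / pRB p true true) * (bR y - muB p x) +
    ((1 - bR r₁) * bR r₂ / pRB p false true) * (xiB p x / (ρ + xiB p x) - thetaB ρ p)

/-!
The influence function splits into an outcome-residual part on `{R₁ = 1, R₂ = 1}` and a
selection part on `{R₁ = 0, R₂ = 1}`. For each `x` the residual `Y − μ̄(x)` has `P̄`-mean zero
and `P`-mean `μ(x) − μ̄(x)`, which produces the first term. The selection part
`ξ̄/(ρ + ξ̄) − θ̄` is centred under `P̄(X | R₁ = 0, R₂ = 1)`, so only its `P`-integral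
survives; the remaining terms are a rearrangement of `θ̄ − θ`.
-/

section
variable {𝒳 : Type*} [Fintype 𝒳] {p q : 𝒳 → Bool → Bool → Bool → ℝ}

lemma RegularB.nonempty (hp : RegularB p) : Nonempty 𝒳 := by
  by_contra h
  rw [not_nonempty_iff] at h
  simpa using hp.1

lemma RegularB.sum_pos (hp : RegularB p) (x : 𝒳) (r₁ r₂ : Bool) :
    0 < ∑ y : Bool, p x y r₁ r₂ :=
  Finset.sum_pos (fun y _ => hp.2 x y r₁ r₂) univ_nonempty

lemma RegularB.pRB_pos (hp : RegularB p) (r₁ r₂ : Bool) : 0 < pRB p r₁ r₂ :=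
  have := hp.nonempty
  Finset.sum_pos (fun x _ => hp.sum_pos x r₁ r₂) univ_nonempty

lemma sum_eq_pRB_mul_pXB {r₁ r₂ : Bool} (h : pRB p r₁ r₂ ≠ 0) (x : 𝒳) :
    ∑ y : Bool, p x y r₁ r₂ = pRB p r₁ r₂ * pXB p r₁ r₂ x := by
  rw [pXB, mul_div_cancel₀ _ h]

lemma sum_pXB {r₁ r₂ : Bool} (h : pRB p r₁ r₂ ≠ 0) : ∑ x : 𝒳, pXB p r₁ r₂ x = 1 := by
  simp only [pXB]
  rw [← Finset.sum_div]
  exact div_self h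

lemma sum_sub_mul_pXB {r₁ r₂ : Bool} (h : pRB p r₁ r₂ ≠ 0) (f : 𝒳 → ℝ) (c : ℝ) :
    ∑ x, (f x - c) * pXB p r₁ r₂ x = ∑ x, f x * pXB p r₁ r₂ x - c := by
  simp only [sub_mul, sum_sub_distrib, ← mul_sum, sum_pXB h, mul_one]

lemma sum_bR_sub_mul {x : 𝒳} (h : ∑ y : Bool, p x y true true ≠ 0) (m : ℝ) :
    ∑ y : Bool, (bR y - m) * p x y true true = (muB p x - m) * ∑ y : Bool, p x y true true := by
  rw [muB, sub_mul, div_mul_cancel₀ _ h]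
  simp only [Fintype.sum_bool, bR, ↓reduceIte, Bool.false_eq_true]
  ring

lemma sum_phiB_mul (ρ : ℝ) (f : Bool → Bool → Bool → ℝ) (x : 𝒳) :
    ∑ y : Bool, ∑ r₁ : Bool, ∑ r₂ : Bool, phiB ρ q x y r₁ r₂ * f y r₁ r₂ =
      ρ * ((1 + xiB q x) / (ρ + xiB q x)) ^ 2 * (varpiB q x / pRB q true true) *
          ∑ y : Bool, (bR y - muB q x) * f y true true +
        (xiB q x / (ρ + xiB q x) - thetaB ρ q) / pRB q false true * ∑ y : Bool, f y false true := by
  simp only [Fintype.sum_bool, phiB, bR, ↓reduceIte, Bool.false_eq_true]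
  ring

lemma sum_phiB_mul_sub_apply (hp : RegularB p) (hq : RegularB q) (ρ : ℝ) (x : 𝒳) :
    ∑ y : Bool, ∑ r₁ : Bool, ∑ r₂ : Bool, phiB ρ q x y r₁ r₂ * (q x y r₁ r₂ - p x y r₁ r₂) =
      -((pRB p true true / pRB q true true) *
          ((ρ / (ρ + xiB q x) ^ 2) * (1 + xiB q x) ^ 2 * (muB p x - muB q x) *
            varpiB q x * pXB p true true x)) +
        (xiB q x / (ρ + xiB q x) - thetaB ρ q) * pXB q false true x -
        (pRB p false true / pRB q false true) *
          ((xiB q x / (ρ + xiB q x) - thetaB ρ q) * pXB p false true x) := by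
  have hq₀₁ := (hq.pRB_pos false true).ne'
  have houtcome : ∑ y : Bool, (bR y - muB q x) * (q x y true true - p x y true true) =
      -(pRB p true true * ((muB p x - muB q x) * pXB p true true x)) := by
    rw [funext fun y => mul_sub (bR y - muB q x) _ _, sum_sub_distrib,
      sum_bR_sub_mul (hq.sum_pos x _ _).ne', sum_bR_sub_mul (hp.sum_pos x _ _).ne',
      sum_eq_pRB_mul_pXB (hp.pRB_pos true true).ne', sub_self]
    ring
  rw [sum_phiB_mul, houtcome, sum_sub_distrib, sum_eq_pRB_mul_pXB hq₀₁,
    sum_eq_pRB_mul_pXB (hp.pRB_pos false true).ne']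
  field_simp
  ring

end

theorem stmt16_general
    {𝒳 : Type*} [Fintype 𝒳] (ρ : ℝ)
    (p q : 𝒳 → Bool → Bool → Bool → ℝ) (hp : RegularB p) (hq : RegularB q) :
    thetaB ρ q - thetaB ρ p -
      (∑ x : 𝒳, ∑ y : Bool, ∑ r₁ : Bool, ∑ r₂ : Bool,
        phiB ρ q x y r₁ r₂ * (q x y r₁ r₂ - p x y r₁ r₂)) =
      (pRB p true true / pRB q true true) *
        (∑ x : 𝒳, (ρ / (ρ + xiB q x) ^ 2) * (1 + xiB q x) ^ 2 * (muB p x - muB q x) *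
          varpiB q x * pXB p true true x) +
      (pRB p false true / pRB q false true) *
        (∑ x : 𝒳, (xiB q x / (ρ + xiB q x) - thetaB ρ p) * pXB p false true x) +
      (1 - pRB p false true / pRB q false true) * (thetaB ρ q - thetaB ρ p) := by
  have hcentred : ∑ x, (xiB q x / (ρ + xiB q x) - thetaB ρ q) * pXB q false true x = 0 := by
    rw [sum_sub_mul_pXB (hq.pRB_pos false true).ne']
    exact sub_self _
  simp only [sum_phiB_mul_sub_apply hp hq, sum_sub_distrib, sum_add_distrib, sum_neg_distrib,
    ← mul_sum, hcentred, sum_sub_mul_pXB (hp.pRB_pos false true).ne']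
  ring

/-- **Decomposition of the remainder (appendix, equations (5)–(6) of the discussion).**
For `ρ > 0` and regular binary-outcome observed-data distributions `p = P` and `q = P̄`,
`θ̄ − θ − ∑_o φ_ρ(o; P̄)(P̄(o) − P(o))
  = (P(R₁=1,R₂=1)/P̄(R₁=1,R₂=1)) ∑_x (ρ/(ρ+ξ̄(x))²)(1+ξ̄(x))²(μ(x)−μ̄(x)) ϖ̄(x) P(X=x | R₁=1,R₂=1)
    + (P(R₁=0,R₂=1)/P̄(R₁=0,R₂=1)) ∑_x (ξ̄(x)/(ρ+ξ̄(x)) − θ) P(X=x | R₁=0,R₂=1)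
    + (1 − P(R₁=0,R₂=1)/P̄(R₁=0,R₂=1)) (θ̄ − θ)`. -/
theorem stmt16
    {𝒳 : Type*} [Fintype 𝒳] (ρ : ℝ) (hρ : 0 < ρ)
    (p q : 𝒳 → Bool → Bool → Bool → ℝ) (hp : RegularB p) (hq : RegularB q) :
    thetaB ρ q - thetaB ρ p -
      (∑ x : 𝒳, ∑ y : Bool, ∑ r₁ : Bool, ∑ r₂ : Bool,
        phiB ρ q x y r₁ r₂ * (q x y r₁ r₂ - p x y r₁ r₂)) =
      (pRB p true true / pRB q true true) *
        (∑ x : 𝒳, (ρ / (ρ + xiB q x) ^ 2) * (1 + xiB q x) ^ 2 * (muB p x - muB q x) *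
          varpiB q x * pXB p true true x) +
      (pRB p false true / pRB q false true) *
        (∑ x : 𝒳, (xiB q x / (ρ + xiB q x) - thetaB ρ p) * pXB p false true x) +
      (1 - pRB p false true / pRB q false true) * (thetaB ρ q - thetaB ρ p) :=
  stmt16_general ρ p q hp hq
end
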